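/- arXiv:2409.10311 — 6 statements merged into one kernel-verified Lean document; each statement's English description precedes it below -/
import Mathlib

section
/- Let (h_k), (s_k), (α_k), (δ_k) be sequences in [0,∞) with h_0 = h_{-1}, and let α ∈ ℝ satisfy 0 ≤ α_k ≤ α < 1 for all k. If h_{k+1} - h_k + s_{k+1} ≤ α_k (h_k - h_{k-1}) + δ_k for all k ≥ 0, then for all k ≥ 1 we have h_k + Σ_{j=1}^k s_j ≤ h_0 + (1/(1-α)) Σ_{j=0}^{k-1} δ_j. -/
/- Alvarez–Attouch lemma, part (a). `h (k+1)` plays the role of `h_k` for `k ≥ -1`,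
so `h 0 = h_{-1}` and the hypothesis `h 1 = h 0` encodes `h_0 = h_{-1}`. -/
theorem stmt0 (h s a d : ℕ → ℝ) (α : ℝ)
    (hh : ∀ k, 0 ≤ h k) (hs : ∀ k, 0 ≤ s k) (hd : ∀ k, 0 ≤ d k)
    (ha : ∀ k, 0 ≤ a k ∧ a k ≤ α) (hα : α < 1)
    (h0 : h 1 = h 0)
    (hrec : ∀ k, h (k + 2) - h (k + 1) + s (k + 1) ≤ a k * (h (k + 1) - h k) + d k) :
    ∀ k, 1 ≤ k →
      h (k + 1) + ∑ j ∈ Finset.Icc 1 k, s j ≤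
        h 1 + (1 / (1 - α)) * ∑ j ∈ Finset.range k, d j := by
  have hα0 : 0 ≤ α := le_trans (ha 0).1 (ha 0).2
  have h1α : 0 < 1 - α := by linarith
  set θ : ℕ → ℝ := fun k => max (h (k + 1) - h k) 0 with hθdef
  set c : ℝ := α / (1 - α) with hcdef
  have hc0 : 0 ≤ c := by positivity
  have hca : c * α = c - α := by rw [hcdef]; field_simp; ring
  have hc1 : 1 + c = 1 / (1 - α) := by rw [hcdef]; field_simp; ring
  have key : ∀ k, h (k + 1) + ∑ j ∈ Finset.Icc 1 k, s j + c * θ k ≤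
      h 1 + (1 / (1 - α)) * ∑ j ∈ Finset.range k, d j := by
    intro k
    induction k with
    | zero =>
      have : θ 0 = 0 := by simp [hθdef, h0]
      simp [this]
    | succ k ih =>
      have hθk : 0 ≤ θ k := le_max_right _ _
      have hd1 : a k * (h (k + 1) - h k) ≤ α * θ k :=
        calc a k * (h (k + 1) - h k) ≤ a k * θ k :=
              mul_le_mul_of_nonneg_left (le_max_left _ _) (ha k).1
          _ ≤ α * θ k := mul_le_mul_of_nonneg_right (ha k).2 hθk
      have hrec' := hrec k
      have hθs : θ (k + 1) ≤ α * θ k + d k := by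
        apply max_le
        · have := hs (k + 1); linarith
        · have := hd k; nlinarith
      have hcθ : c * θ (k + 1) ≤ c * (α * θ k + d k) :=
        mul_le_mul_of_nonneg_left hθs hc0
      have hexp : c * (α * θ k + d k) = c * θ k - α * θ k + c * d k := by
        have : c * (α * θ k + d k) = (c * α) * θ k + c * d k := by ring
        rw [this, hca]; ring
      have hE : (1 / (1 - α)) * (∑ j ∈ Finset.range k, d j + d k)
          = (1 / (1 - α)) * ∑ j ∈ Finset.range k, d j + d k + c * d k := by
        rw [← hc1]; ring
      rw [Finset.sum_Icc_succ_top (by omega : 1 ≤ k + 1), Finset.sum_range_succ, hE]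
      linarith [hcθ, hexp ▸ hcθ]
  intro k _
  have hθk : 0 ≤ θ k := le_max_right _ _
  have := key k
  nlinarith [mul_nonneg hc0 hθk]
end

section
/- Let (h_k), (s_k), (α_k), (δ_k) be sequences in [0,∞) with h_0 = h_{-1}, and 0 ≤ α_k ≤ α < 1 for all k. If h_{k+1} - h_k + s_{k+1} ≤ α_k (h_k - h_{k-1}) + δ_k for all k ≥ 0 and Σ_{k=0}^∞ δ_k < ∞, then lim_{k→∞} h_k exists (the sequence (h_k) converges to some element of [0,∞)). -/
/- Alvarez–Attouch lemma, part (b). `h (k+1)` plays the role of `h_k` for `k ≥ -1`. -/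
theorem stmt1 (h s a d : ℕ → ℝ) (α : ℝ)
    (hh : ∀ k, 0 ≤ h k) (hs : ∀ k, 0 ≤ s k) (hd : ∀ k, 0 ≤ d k)
    (ha : ∀ k, 0 ≤ a k ∧ a k ≤ α) (hα : α < 1)
    (h0 : h 1 = h 0)
    (hrec : ∀ k, h (k + 2) - h (k + 1) + s (k + 1) ≤ a k * (h (k + 1) - h k) + d k)
    (hsum : Summable d) :
    ∃ l : ℝ, 0 ≤ l ∧ Filter.Tendsto (fun k => h (k + 1)) Filter.atTop (nhds l) := by
  have hα0 : 0 ≤ α := le_trans (ha 0).1 (ha 0).2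
  set p : ℕ → ℝ := fun k => max (h (k+1) - h k) 0 with hpdef
  have hpnn : ∀ k, 0 ≤ p k := fun k => le_max_right _ _
  have hp0 : p 0 = 0 := by simp [hpdef, h0]
  have hpk : ∀ k, p (k+1) ≤ α * p k + d k := by
    intro k
    have h1 := hrec k
    have h2 := (ha k).1
    have h3 := (ha k).2
    have h4 : a k * (h (k+1) - h k) ≤ α * p k :=
      calc a k * (h (k+1) - h k) ≤ a k * p k :=
            mul_le_mul_of_nonneg_left (le_max_left _ _) h2
        _ ≤ α * p k := mul_le_mul_of_nonneg_right h3 (hpnn k)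
    apply max_le
    · have := hs (k+1); linarith
    · exact add_nonneg (mul_nonneg hα0 (hpnn k)) (hd k)
  have hD0 : 0 ≤ ∑' k, d k := tsum_nonneg hd
  have hdD : ∀ n, ∑ k ∈ Finset.range n, d k ≤ ∑' k, d k :=
    fun n => Summable.sum_le_tsum (Finset.range n) (fun i _ => hd i) hsum
  have hPmono : ∀ n, ∑ k ∈ Finset.range n, p k ≤ ∑ k ∈ Finset.range (n+1), p k := by
    intro n
    rw [Finset.sum_range_succ]
    linarith [hpnn n]
  have hPb : ∀ n, ∑ k ∈ Finset.range n, p k ≤ (∑' k, d k) / (1 - α) := by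
    have key : ∀ n, ∑ k ∈ Finset.range (n+1), p k ≤ (∑' k, d k) / (1 - α) := by
      intro n
      have e1 : ∑ k ∈ Finset.range (n+1), p k
          = (∑ k ∈ Finset.range n, p (k+1)) + p 0 := Finset.sum_range_succ' p n
      have e2 : ∑ k ∈ Finset.range n, p (k+1)
          ≤ ∑ k ∈ Finset.range n, (α * p k + d k) :=
        Finset.sum_le_sum (fun i _ => hpk i)
      have e3 : ∑ k ∈ Finset.range n, (α * p k + d k)
          = α * ∑ k ∈ Finset.range n, p k + ∑ k ∈ Finset.range n, d k := by
        rw [Finset.sum_add_distrib, Finset.mul_sum]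
      have e4 : α * ∑ k ∈ Finset.range n, p k ≤ α * ∑ k ∈ Finset.range (n+1), p k :=
        mul_le_mul_of_nonneg_left (hPmono n) hα0
      have e5 : (1 - α) * ∑ k ∈ Finset.range (n+1), p k ≤ ∑' k, d k := by
        have := hdD n
        nlinarith [e2, e3, e4]
      rw [le_div_iff₀ (by linarith : (0:ℝ) < 1 - α)]
      linarith [e5]
    intro n
    cases n with
    | zero => simpa using div_nonneg hD0 (by linarith : (0:ℝ) ≤ 1 - α)
    | succ m => exact key m
  have hPsum : Summable p := summable_of_sum_range_le hpnn hPb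
  -- g k = h (k+1) - partial sums of p up to k+1, is antitone and bounded below
  set g : ℕ → ℝ := fun k => h (k+1) - ∑ j ∈ Finset.range (k+1), p j with hgdef
  have hg_anti : Antitone g := by
    apply antitone_nat_of_succ_le
    intro k
    have : h (k+2) - h (k+1) ≤ p (k+1) := le_max_left _ _
    simp only [hgdef]
    rw [Finset.sum_range_succ (n := k+1)]
    linarith
  have hg_bdd : BddBelow (Set.range g) := by
    refine ⟨-((∑' k, d k) / (1 - α)), ?_⟩
    rintro x ⟨k, rfl⟩
    have := hPb (k+1)
    have := hh (k+1)
    simp only [hgdef]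
    linarith
  have hg_lim : Filter.Tendsto g Filter.atTop (nhds (⨅ k, g k)) :=
    tendsto_atTop_ciInf hg_anti hg_bdd
  have hP_lim : Filter.Tendsto (fun k => ∑ j ∈ Finset.range (k+1), p j)
      Filter.atTop (nhds (∑' k, p k)) :=
    (hPsum.hasSum.tendsto_sum_nat).comp (Filter.tendsto_add_atTop_nat 1)
  have hh_lim : Filter.Tendsto (fun k => h (k+1)) Filter.atTop
      (nhds ((⨅ k, g k) + ∑' k, p k)) := by
    have : (fun k => h (k+1)) = fun k => g k + ∑ j ∈ Finset.range (k+1), p j := by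
      funext k; simp [hgdef]
    rw [this]
    exact hg_lim.add hP_lim
  exact ⟨_, ge_of_tendsto' hh_lim (fun k => hh (k+1)), hh_lim⟩
end

section
/- Let H be a finite-dimensional inner product space, S a nonempty subset of H, and (p_k) a sequence in H such that every cluster point of (p_k) belongs to S and lim_{k→∞} ‖p_k - p‖ exists for every p ∈ S. Then (p_k) converges to a point of S. -/
/- Opial's lemma in finite dimensions. -/
theorem stmt2 {H : Type*} [NormedAddCommGroup H] [InnerProductSpace ℝ H]
    [FiniteDimensional ℝ H] (S : Set H) (hS : S.Nonempty) (p : ℕ → H)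
    (hcluster : ∀ q : H, MapClusterPt q Filter.atTop p → q ∈ S)
    (hlim : ∀ q ∈ S, ∃ l : ℝ, Filter.Tendsto (fun k => ‖p k - q‖) Filter.atTop (nhds l)) :
    ∃ q ∈ S, Filter.Tendsto p Filter.atTop (nhds q) := by
  obtain ⟨q₀, hq₀⟩ := hS
  obtain ⟨l₀, hl₀⟩ := hlim q₀ hq₀
  -- the sequence is bounded
  obtain ⟨R, hR⟩ := hl₀.bddAbove_range
  have hmem : ∀ k, p k ∈ Metric.closedBall q₀ R := by
    intro k
    have : ‖p k - q₀‖ ≤ R := hR ⟨k, rfl⟩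
    simpa [Metric.mem_closedBall, dist_eq_norm] using this
  -- extract a convergent subsequence
  obtain ⟨q, -, φ, hφ, hconv⟩ :=
    (isCompact_closedBall q₀ R).tendsto_subseq hmem
  have hφtop : Filter.Tendsto φ Filter.atTop Filter.atTop := hφ.tendsto_atTop
  have hqcluster : MapClusterPt q Filter.atTop p :=
    MapClusterPt.of_comp hφtop hconv.mapClusterPt
  have hqS : q ∈ S := hcluster q hqcluster
  obtain ⟨l, hl⟩ := hlim q hqS
  -- along the subsequence, ‖p k - q‖ → 0, hence l = 0
  have h0 : Filter.Tendsto (fun n => ‖p (φ n) - q‖) Filter.atTop (nhds 0) := by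
    have := hconv.sub_const q
    simpa using this.norm
  have hl' : Filter.Tendsto (fun n => ‖p (φ n) - q‖) Filter.atTop (nhds l) :=
    hl.comp hφtop
  have hl0 : l = 0 := tendsto_nhds_unique hl' h0
  refine ⟨q, hqS, ?_⟩
  rw [tendsto_iff_norm_sub_tendsto_zero]
  simpa [hl0] using hl
end

section
/- Let G be a real inner product space with weighted norm ‖(z,w)‖_γ² = γ^{-1}‖z‖² + γ‖w‖² on G², for γ > 0. Let σ ∈ [0,1), and let v, ẑ, ỹ, Lx, ŷ, e ∈ G satisfy e = v - ẑ + γ(ỹ - Lx) and ‖e‖² ≤ σ²γ²‖Lx - ŷ‖². Define p̃ = (v, Lx), p̂ = (ẑ, ŷ), and p̆ = (ẑ + γ(Lx - ỹ), γ^{-1}(ẑ + γLx - v)). Then ‖p̃ - p̆‖_γ² = γ^{-1}(‖e‖² + ‖v - ẑ‖²), and moreover ‖p̃ - p̆‖_γ ≤ ‖p̃ - p̂‖_γ and ‖p̆ - p̂‖_γ ≤ 2‖p̃ - p̂‖_γ. -/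
private lemma mink (a b c d : ℝ) (ha : 0 ≤ a) (hb : 0 ≤ b) (hc : 0 ≤ c) (hd : 0 ≤ d) :
    Real.sqrt ((a + c) ^ 2 + (b + d) ^ 2) ≤
      Real.sqrt (a ^ 2 + b ^ 2) + Real.sqrt (c ^ 2 + d ^ 2) := by
  set s := Real.sqrt (a ^ 2 + b ^ 2) with hs
  set t := Real.sqrt (c ^ 2 + d ^ 2) with ht
  have hs0 : 0 ≤ s := Real.sqrt_nonneg _
  have ht0 : 0 ≤ t := Real.sqrt_nonneg _
  have hs2 : s ^ 2 = a ^ 2 + b ^ 2 := Real.sq_sqrt (by positivity)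
  have ht2 : t ^ 2 = c ^ 2 + d ^ 2 := Real.sq_sqrt (by positivity)
  rw [show s + t = Real.sqrt ((s + t) ^ 2) from (Real.sqrt_sq (by positivity)).symm]
  apply Real.sqrt_le_sqrt
  nlinarith [sq_nonneg (a * d - b * c), sq_nonneg (s * t - a * c - b * d), mul_nonneg hs0 ht0]

private lemma tri {G : Type*} [NormedAddCommGroup G] [InnerProductSpace ℝ G]
    (γ : ℝ) (hγ : 0 < γ) (x y : G × G) :
    Real.sqrt (γ⁻¹ * ‖(x + y).1‖ ^ 2 + γ * ‖(x + y).2‖ ^ 2) ≤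
      Real.sqrt (γ⁻¹ * ‖x.1‖ ^ 2 + γ * ‖x.2‖ ^ 2) +
      Real.sqrt (γ⁻¹ * ‖y.1‖ ^ 2 + γ * ‖y.2‖ ^ 2) := by
  have hγi : 0 ≤ γ⁻¹ := by positivity
  set a := Real.sqrt γ⁻¹ * ‖x.1‖
  set b := Real.sqrt γ * ‖x.2‖
  set c := Real.sqrt γ⁻¹ * ‖y.1‖
  set d := Real.sqrt γ * ‖y.2‖
  have hsqi : (Real.sqrt γ⁻¹) ^ 2 = γ⁻¹ := Real.sq_sqrt hγi
  have hsq : (Real.sqrt γ) ^ 2 = γ := Real.sq_sqrt hγ.le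
  have ha2 : a ^ 2 = γ⁻¹ * ‖x.1‖ ^ 2 := by rw [mul_pow, hsqi]
  have hb2 : b ^ 2 = γ * ‖x.2‖ ^ 2 := by rw [mul_pow, hsq]
  have hc2 : c ^ 2 = γ⁻¹ * ‖y.1‖ ^ 2 := by rw [mul_pow, hsqi]
  have hd2 : d ^ 2 = γ * ‖y.2‖ ^ 2 := by rw [mul_pow, hsq]
  have h1 : γ⁻¹ * ‖(x + y).1‖ ^ 2 + γ * ‖(x + y).2‖ ^ 2 ≤ (a + c) ^ 2 + (b + d) ^ 2 := by
    have t1 : ‖(x + y).1‖ ≤ ‖x.1‖ + ‖y.1‖ := norm_add_le _ _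
    have t2 : ‖(x + y).2‖ ≤ ‖x.2‖ + ‖y.2‖ := norm_add_le _ _
    have n1 : (0:ℝ) ≤ ‖(x + y).1‖ := norm_nonneg _
    have n2 : (0:ℝ) ≤ ‖(x + y).2‖ := norm_nonneg _
    have e1 : (a + c) ^ 2 = γ⁻¹ * (‖x.1‖ + ‖y.1‖) ^ 2 := by
      rw [show a + c = Real.sqrt γ⁻¹ * (‖x.1‖ + ‖y.1‖) by ring, mul_pow, hsqi]
    have e2 : (b + d) ^ 2 = γ * (‖x.2‖ + ‖y.2‖) ^ 2 := by
      rw [show b + d = Real.sqrt γ * (‖x.2‖ + ‖y.2‖) by ring, mul_pow, hsq]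
    rw [e1, e2]
    have : ‖(x + y).1‖ ^ 2 ≤ (‖x.1‖ + ‖y.1‖) ^ 2 := by nlinarith [norm_nonneg x.1, norm_nonneg y.1]
    have : ‖(x + y).2‖ ^ 2 ≤ (‖x.2‖ + ‖y.2‖) ^ 2 := by nlinarith [norm_nonneg x.2, norm_nonneg y.2]
    nlinarith
  calc Real.sqrt (γ⁻¹ * ‖(x + y).1‖ ^ 2 + γ * ‖(x + y).2‖ ^ 2)
      ≤ Real.sqrt ((a + c) ^ 2 + (b + d) ^ 2) := Real.sqrt_le_sqrt h1
    _ ≤ Real.sqrt (a ^ 2 + b ^ 2) + Real.sqrt (c ^ 2 + d ^ 2) :=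
        mink a b c d (by positivity) (by positivity) (by positivity) (by positivity)
    _ = _ := by rw [ha2, hb2, hc2, hd2]

/- Lemma on `p̃, p̂, p̆` for the weighted norm on G × G. -/
theorem stmt7 {G : Type*} [NormedAddCommGroup G] [InnerProductSpace ℝ G]
    (γ σ : ℝ) (hγ : 0 < γ) (hσ0 : 0 ≤ σ) (hσ1 : σ < 1)
    (v zhat ytil Lx yhat e : G)
    (N : G × G → ℝ) (hN : ∀ r : G × G, N r = γ⁻¹ * ‖r.1‖ ^ 2 + γ * ‖r.2‖ ^ 2)
    (he : e = v - zhat + γ • (ytil - Lx))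
    (herr : ‖e‖ ^ 2 ≤ σ ^ 2 * γ ^ 2 * ‖Lx - yhat‖ ^ 2)
    (ptil phat pbrev : G × G)
    (hptil : ptil = (v, Lx)) (hphat : phat = (zhat, yhat))
    (hpbrev : pbrev = (zhat + γ • (Lx - ytil), γ⁻¹ • (zhat + γ • Lx - v))) :
    N (ptil - pbrev) = γ⁻¹ * (‖e‖ ^ 2 + ‖v - zhat‖ ^ 2) ∧
    Real.sqrt (N (ptil - pbrev)) ≤ Real.sqrt (N (ptil - phat)) ∧
    Real.sqrt (N (pbrev - phat)) ≤ 2 * Real.sqrt (N (ptil - phat)) := by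
  have hγ0 : γ ≠ 0 := hγ.ne'
  have hcomp : ptil - pbrev = (e, γ⁻¹ • (v - zhat)) := by
    rw [hptil, hpbrev, Prod.mk_sub_mk, Prod.mk.injEq]
    constructor
    · rw [he]; module
    · match_scalars <;> field_simp <;> ring
  have hnormsmul : ‖γ⁻¹ • (v - zhat)‖ ^ 2 = γ⁻¹ ^ 2 * ‖v - zhat‖ ^ 2 := by
    rw [norm_smul, mul_pow]
    congr 1
    rw [Real.norm_eq_abs, abs_of_pos (by positivity)]
  have hN1 : N (ptil - pbrev) = γ⁻¹ * (‖e‖ ^ 2 + ‖v - zhat‖ ^ 2) := by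
    rw [hN, hcomp, hnormsmul]
    field_simp
  have hN2 : N (ptil - phat) = γ⁻¹ * ‖v - zhat‖ ^ 2 + γ * ‖Lx - yhat‖ ^ 2 := by
    rw [hN, hptil, hphat]
    simp [Prod.sub_def]
  have hle : N (ptil - pbrev) ≤ N (ptil - phat) := by
    rw [hN1, hN2]
    have hσ2 : σ ^ 2 ≤ 1 := by nlinarith
    have h1 : ‖e‖ ^ 2 ≤ γ ^ 2 * ‖Lx - yhat‖ ^ 2 := by
      nlinarith [mul_nonneg (by nlinarith : (0:ℝ) ≤ 1 - σ ^ 2) (sq_nonneg (γ * ‖Lx - yhat‖))]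
    have hγi : 0 < γ⁻¹ := by positivity
    have := mul_le_mul_of_nonneg_left h1 hγi.le
    rw [show γ⁻¹ * (γ ^ 2 * ‖Lx - yhat‖ ^ 2) = γ * ‖Lx - yhat‖ ^ 2 by field_simp] at this
    nlinarith
  refine ⟨hN1, Real.sqrt_le_sqrt hle, ?_⟩
  have hdecomp : pbrev - phat = (ptil - phat) + (pbrev - ptil) := by abel
  have htri := tri γ hγ (ptil - phat) (pbrev - ptil)
  rw [← hdecomp, ← hN (pbrev - phat), ← hN (ptil - phat), ← hN (pbrev - ptil)] at htri
  have hNneg : N (pbrev - ptil) = N (ptil - pbrev) := by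
    rw [hN, hN]
    simp [Prod.sub_def, norm_sub_rev]
  rw [hNneg] at htri
  have := Real.sqrt_le_sqrt hle
  linarith
end

section
/- Let g: G → (-∞,∞] be proper convex on a finite-dimensional inner product space. Given points ỹ_j ∈ ∂_{ε_j} g*(v_j) for j = 0,…,k with ε_j ≥ 0, define v^a = (1/(k+1)) Σ_j v_j, ỹ^a = (1/(k+1)) Σ_j ỹ_j, and ε^a = (1/(k+1)) Σ_j [ε_j + ⟨ỹ_j, v_j - v^a⟩]. Then ε^a ≥ 0 and ỹ^a ∈ ∂_{ε^a} g*(v^a). -/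
open RealInnerProductSpace

universe u


lemma ecast (a b p q : ℝ) : (a : EReal) * (p : EReal) + (b : EReal) * (q : EReal)
    = ((a * p + b * q : ℝ) : EReal) := by push_cast; rfl

-- interior case: affine minorant when the domain has nonempty interior
lemma am_interior {G : Type*} [NormedAddCommGroup G] [InnerProductSpace ℝ G]
    [FiniteDimensional ℝ G]
    (g : G → EReal) (hbot : ∀ y, g y ≠ ⊥)
    (hconv : ∀ x y : G, ∀ a b : ℝ, 0 ≤ a → 0 ≤ b → a + b = 1 →
      g (a • x + b • y) ≤ (a : EReal) * g x + (b : EReal) * g y)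
    (x0 : G) (hx0 : x0 ∈ interior {y : G | g y ≠ ⊤}) :
    ∃ (v : G) (b : ℝ), ∀ y, ((⟪v, y⟫ - b : ℝ) : EReal) ≤ g y := by
  set S : Set G := {y : G | g y ≠ ⊤} with hS
  set f : G → ℝ := fun y => (g y).toReal with hf
  have hcoe : ∀ y ∈ S, g y = ((f y : ℝ) : EReal) := fun y hy =>
    (EReal.coe_toReal hy (hbot y)).symm
  have hkey0 : ∀ x ∈ S, ∀ y ∈ S, ∀ a b : ℝ, 0 ≤ a → 0 ≤ b → a + b = 1 →
      g (a • x + b • y) ≤ ((a * f x + b * f y : ℝ) : EReal) := by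
    intro x hx y hy a b ha hb hab
    have h := hconv x y a b ha hb hab
    rw [hcoe x hx, hcoe y hy, ecast] at h
    exact h
  -- convexity of S and of f on S
  have hfconv : ConvexOn ℝ S f := by
    constructor
    · intro x hx y hy a b ha hb hab
      have h2 := hkey0 x hx y hy a b ha hb hab
      exact fun htop => by rw [htop] at h2; exact (EReal.coe_ne_top _) (top_le_iff.mp h2)
    · intro x hx y hy a b ha hb hab
      have h2 := hkey0 x hx y hy a b ha hb hab
      have hmem : a • x + b • y ∈ S :=
        fun htop => by rw [htop] at h2; exact (EReal.coe_ne_top _) (top_le_iff.mp h2)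
      rw [hcoe _ hmem] at h2
      exact_mod_cast h2
  have hSconv : Convex ℝ S := hfconv.1
  have hfc : ContinuousOn f (interior S) :=
    (hfconv.subset interior_subset (hSconv.interior)).continuousOn isOpen_interior
  -- the open strict epigraph over interior S
  set E : Set (G × ℝ) := {p | p.1 ∈ interior S ∧ f p.1 < p.2} with hE
  have hEopen : IsOpen E := by
    have : E = (interior S ×ˢ (Set.univ : Set ℝ)) ∩
        (fun p : G × ℝ => p.2 - f p.1) ⁻¹' Set.Ioi 0 := by
      ext p; simp [hE, sub_pos, and_comm]
    rw [this]
    refine ContinuousOn.isOpen_inter_preimage ?_ (isOpen_interior.prod isOpen_univ) isOpen_Ioi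
    exact continuousOn_snd.sub (hfc.comp continuousOn_fst (fun p hp => (Set.mem_prod.mp hp).1))
  have hEconv : Convex ℝ E := by
    intro p hp q hq a b ha hb hab
    constructor
    · exact hSconv.interior hp.1 hq.1 ha hb hab
    · rcases eq_or_lt_of_le ha with rfl | ha'
      · simp only [zero_add] at hab; subst hab; simpa using hq.2
      rcases eq_or_lt_of_le hb with rfl | hb'
      · simp only [add_zero] at hab; subst hab; simpa using hp.2
      have h1 : f (a • p.1 + b • q.1) ≤ a * f p.1 + b * f q.1 :=
        hfconv.2 (interior_subset hp.1) (interior_subset hq.1) ha hb hab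
      have h2 : a * f p.1 + b * f q.1 < a * p.2 + b * q.2 :=
        add_lt_add (mul_lt_mul_of_pos_left hp.2 ha') (mul_lt_mul_of_pos_left hq.2 hb')
      exact h1.trans_lt h2
  have hp0 : ((x0, f x0 - 1) : G × ℝ) ∉ E := by
    rintro ⟨-, h⟩; simp at h; linarith
  obtain ⟨φ, hφ⟩ := geometric_hahn_banach_open_point hEconv hEopen hp0
  set ψ : G →L[ℝ] ℝ := φ.comp (ContinuousLinearMap.inl ℝ G ℝ) with hψ
  set β : ℝ := φ (0, 1) with hβdef
  have hdec : ∀ (y : G) (t : ℝ), φ (y, t) = ψ y + t * β := by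
    intro y t
    have h : (y, t) = (y, (0:ℝ)) + t • ((0:G), (1:ℝ)) := by simp [Prod.ext_iff]
    rw [h, map_add, map_smul, smul_eq_mul]; rfl
  set u0 : ℝ := ψ x0 + (f x0 - 1) * β with hu0
  have key : ∀ y ∈ interior S, ∀ t, f y < t → ψ y + t * β < u0 := by
    intro y hy t ht
    have h := hφ (y, t) ⟨hy, ht⟩
    rwa [hdec y t, hdec x0 (f x0 - 1)] at h
  -- β < 0
  have hβ : β < 0 := by
    rcases lt_trichotomy β 0 with h | h | h
    · exact h
    · exfalso
      have hk := key x0 hx0 (f x0 + 1) (by linarith)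
      rw [h] at hk; rw [hu0, h] at hk; simp at hk
    · exfalso
      set t : ℝ := max (f x0 + 1) ((u0 - ψ x0) / β + 1) with htdef
      have h1 := key x0 hx0 t (lt_of_lt_of_le (by linarith) (le_max_left _ _))
      have h2 : (u0 - ψ x0) / β + 1 ≤ t := le_max_right _ _
      have h3 : (u0 - ψ x0) / β * β = u0 - ψ x0 := div_mul_cancel₀ _ (ne_of_gt h)
      nlinarith
  -- pass to the limit t ↓ f y
  have key2 : ∀ y ∈ interior S, ψ y + f y * β ≤ u0 := by
    intro y hy
    by_contra hcon
    push_neg at hcon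
    set ε : ℝ := (ψ y + f y * β - u0) / (-2 * β) with hεdef
    have hεpos : 0 < ε := div_pos (by linarith) (by linarith)
    have h1 := key y hy (f y + ε) (by linarith)
    have h2 : ε * (-2 * β) = ψ y + f y * β - u0 := by
      rw [hεdef, div_mul_cancel₀ _ (by nlinarith : (-2 * β) ≠ (0:ℝ))]
    nlinarith
  -- Riesz representation
  set w : G := (InnerProductSpace.toDual ℝ G).symm ψ with hw
  have hwin : ∀ y : G, ⟪w, y⟫ = ψ y := by
    intro y; rw [hw, InnerProductSpace.toDual_symm_apply]
  set v : G := (-β⁻¹) • w with hv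
  set b : ℝ := -(u0 * β⁻¹) with hbdef
  -- minorant on interior S
  have hmin : ∀ y ∈ interior S, ⟪v, y⟫ - b ≤ f y := by
    intro y hy
    have h1 := key2 y hy
    rw [← hwin y] at h1
    rw [hv, real_inner_smul_left, hbdef]
    have hβ' : β⁻¹ < 0 := inv_neg''.mpr hβ
    have hmm := mul_le_mul_of_nonpos_left h1 hβ'.le
    have hexp : β⁻¹ * (⟪w, y⟫ + f y * β) = β⁻¹ * ⟪w, y⟫ + f y := by
      rw [mul_add, mul_comm (f y) β, ← mul_assoc, inv_mul_cancel₀ (ne_of_lt hβ), one_mul]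
    rw [hexp] at hmm
    linarith
  -- extend to all of G
  clear hv hbdef
  clear_value v b
  refine ⟨v, 2 * b + f x0 - ⟪v, x0⟫, fun y => ?_⟩
  by_cases hy : y ∈ S
  · have hm : (2⁻¹ : ℝ) • x0 + (2⁻¹ : ℝ) • y ∈ interior S := by
      apply hSconv.openSegment_interior_self_subset_interior hx0 hy
      exact ⟨2⁻¹, 2⁻¹, by norm_num, by norm_num, by norm_num, rfl⟩
    have h1 : f ((2⁻¹ : ℝ) • x0 + (2⁻¹ : ℝ) • y) ≤ 2⁻¹ * f x0 + 2⁻¹ * f y :=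
      hfconv.2 (interior_subset hx0) hy (by norm_num) (by norm_num) (by norm_num)
    have h2 := hmin _ hm
    have h3 : ⟪v, (2⁻¹ : ℝ) • x0 + (2⁻¹ : ℝ) • y⟫ = 2⁻¹ * ⟪v, x0⟫ + 2⁻¹ * ⟪v, y⟫ := by
      rw [inner_add_right, real_inner_smul_right, real_inner_smul_right]
    rw [h3] at h2
    have h4 : 2⁻¹ * ⟪v, x0⟫ + 2⁻¹ * ⟪v, y⟫ - b ≤ 2⁻¹ * f x0 + 2⁻¹ * f y := h2.trans h1
    rw [hcoe y hy]
    have h5 : ⟪v, y⟫ - (2 * b + f x0 - ⟪v, x0⟫) ≤ f y := by linarith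
    exact_mod_cast h5
  · simp only [hS, Set.mem_setOf_eq, not_not] at hy
    rw [hy]; exact le_top

lemma affine_minorant (n : ℕ) : ∀ {G : Type u} [NormedAddCommGroup G] [InnerProductSpace ℝ G]
    [FiniteDimensional ℝ G], Module.finrank ℝ G ≤ n → ∀ (g : G → EReal), (∀ y, g y ≠ ⊥) →
    (∀ x y : G, ∀ a b : ℝ, 0 ≤ a → 0 ≤ b → a + b = 1 →
      g (a • x + b • y) ≤ (a : EReal) * g x + (b : EReal) * g y) →
    ∀ (y0 : G) (c : ℝ), g y0 = (c : EReal) →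
    ∃ (v : G) (b : ℝ), ∀ y, ((⟪v, y⟫ - b : ℝ) : EReal) ≤ g y := by
  induction n with
  | zero =>
    intro G _ _ _ hn g hbot hconv y0 c h0
    have hsub : Subsingleton G := Module.finrank_zero_iff.mp (Nat.le_zero.mp hn)
    refine ⟨0, -c, fun y => ?_⟩
    have hyy : y = y0 := Subsingleton.elim _ _
    rw [hyy, h0, inner_zero_left]
    norm_num
  | succ n ih =>
    intro G _ _ _ hn g hbot hconv y0 c h0
    set S : Set G := {y : G | g y ≠ ⊤} with hS
    have hy0S : y0 ∈ S := by simp only [hS, Set.mem_setOf_eq, h0]; exact EReal.coe_ne_top c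
    have hSconv : Convex ℝ S := by
      intro x hx y hy a b ha hb hab
      have h := hconv x y a b ha hb hab
      rw [← EReal.coe_toReal hx (hbot x), ← EReal.coe_toReal hy (hbot y), ecast] at h
      exact fun ht => EReal.coe_ne_top _ (top_le_iff.mp (ht ▸ h))
    by_cases hsp : affineSpan ℝ S = ⊤
    · obtain ⟨x0, hx0⟩ := hSconv.interior_nonempty_iff_affineSpan_eq_top.mpr hsp
      exact am_interior g hbot hconv x0 hx0
    · set V : Submodule ℝ G := (affineSpan ℝ S).direction with hV
      have hne : (affineSpan ℝ S : Set G).Nonempty := ⟨y0, subset_affineSpan ℝ S hy0S⟩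
      have hVne : V ≠ ⊤ := fun h => hsp ((AffineSubspace.direction_eq_top_iff_of_nonempty hne).mp h)
      have hlt : Module.finrank ℝ V < Module.finrank ℝ G :=
        Submodule.finrank_lt hVne
      have hn' : Module.finrank ℝ V ≤ n := by omega
      set g' : V → EReal := fun w => g (y0 + (w : G)) with hg'
      have hbot' : ∀ w, g' w ≠ ⊥ := fun w => hbot _
      have hconv' : ∀ x y : V, ∀ a b : ℝ, 0 ≤ a → 0 ≤ b → a + b = 1 →
          g' (a • x + b • y) ≤ (a : EReal) * g' x + (b : EReal) * g' y := by
        intro x y a b ha hb hab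
        have harr : y0 + ((a • x + b • y : V) : G) = a • (y0 + (x : G)) + b • (y0 + (y : G)) := by
          have h1 : a • (y0 + (x : G)) + b • (y0 + (y : G))
              = (a + b) • y0 + (a • (x : G) + b • (y : G)) := by module
          rw [h1, hab, one_smul]
          push_cast
          ring_nf
        show g (y0 + ((a • x + b • y : V) : G)) ≤ (a : EReal) * g (y0 + (x : G)) + (b : EReal) * g (y0 + (y : G))
        rw [harr]
        exact hconv (y0 + (x : G)) (y0 + (y : G)) a b ha hb hab
      have h0' : g' 0 = (c : EReal) := by simp [hg', h0]
      obtain ⟨v', b, hvb⟩ := ih hn' g' hbot' hconv' 0 c h0'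
      refine ⟨(v' : G), b + ⟪(v' : G), y0⟫, fun y => ?_⟩
      by_cases hy : y ∈ S
      · have hmem : y - y0 ∈ V := by
          have := AffineSubspace.vsub_mem_direction
            (subset_affineSpan ℝ S hy) (subset_affineSpan ℝ S hy0S)
          simpa [vsub_eq_sub] using this
        have h1 := hvb ⟨y - y0, hmem⟩
        have h2 : g' ⟨y - y0, hmem⟩ = g y := by simp [hg']
        rw [h2] at h1
        have h3 : (⟪v', (⟨y - y0, hmem⟩ : V)⟫ : ℝ) = ⟪(v' : G), y⟫ - ⟪(v' : G), y0⟫ := by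
          have : (⟪v', (⟨y - y0, hmem⟩ : V)⟫ : ℝ) = ⟪(v' : G), y - y0⟫ := rfl
          rw [this, inner_sub_right]
        rw [h3] at h1
        rw [show (⟪(v' : G), y⟫ - (b + ⟪(v' : G), y0⟫) : ℝ)
          = ⟪(v' : G), y⟫ - ⟪(v' : G), y0⟫ - b from by ring]
        exact h1
      · simp only [hS, Set.mem_setOf_eq, not_not] at hy
        rw [hy]; exact le_top




/- Ergodic transportation formula for ε-subdifferentials of g*. -/
theorem stmt17 {G : Type*} [NormedAddCommGroup G] [InnerProductSpace ℝ G]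
    [FiniteDimensional ℝ G]
    (g : G → EReal)
    (hproper : (∀ y, g y ≠ ⊥) ∧ ∃ y, g y ≠ ⊤)
    (hconv : ∀ x y : G, ∀ a b : ℝ, 0 ≤ a → 0 ≤ b → a + b = 1 →
      g (a • x + b • y) ≤ (a : EReal) * g x + (b : EReal) * g y)
    (gstar : G → EReal)
    (hgstar : ∀ v : G, gstar v = ⨆ y' : G, (((⟪v, y'⟫ : ℝ) : EReal) - g y'))
    (k : ℕ) (ytil v : ℕ → G) (ε : ℕ → ℝ) (hε : ∀ j, 0 ≤ ε j)
    (hsub : ∀ j ≤ k, ∀ v' : G,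
      gstar v' ≥ gstar (v j) + ((⟪ytil j, v' - v j⟫ - ε j : ℝ) : EReal))
    (va ya : G) (εa : ℝ)
    (hva : va = (k + 1 : ℝ)⁻¹ • ∑ j ∈ Finset.range (k + 1), v j)
    (hya : ya = (k + 1 : ℝ)⁻¹ • ∑ j ∈ Finset.range (k + 1), ytil j)
    (hεa : εa = (k + 1 : ℝ)⁻¹ *
      ∑ j ∈ Finset.range (k + 1), (ε j + ⟪ytil j, v j - va⟫)) :
    0 ≤ εa ∧ ∀ v' : G, gstar v' ≥ gstar va + ((⟪ya, v' - va⟫ - εa : ℝ) : EReal) := by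
  obtain ⟨hbot, y0, hy0⟩ := hproper
  have npos : (0:ℝ) < k + 1 := by positivity
  have hgy0 : g y0 = ((g y0).toReal : EReal) := (EReal.coe_toReal hy0 (hbot y0)).symm
  -- affine minorant
  obtain ⟨vst, bst, hmin⟩ := affine_minorant (Module.finrank ℝ G) le_rfl g hbot hconv
    y0 ((g y0).toReal) hgy0
  -- gstar vst is finite from above
  have hub : gstar vst ≤ (bst : EReal) := by
    rw [hgstar]
    refine iSup_le fun y' => ?_
    by_cases ht : g y' = ⊤
    · rw [ht]
      simp
    · have hcoe : g y' = ((g y').toReal : EReal) := (EReal.coe_toReal ht (hbot y')).symm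
      have h1 := hmin y'
      rw [hcoe] at h1 ⊢
      have h2 : (⟪vst, y'⟫ - bst : ℝ) ≤ (g y').toReal := by exact_mod_cast h1
      have h3 : ((⟪vst, y'⟫ : ℝ) : EReal) - ((g y').toReal : EReal)
          = ((⟪vst, y'⟫ - (g y').toReal : ℝ) : EReal) := by norm_cast
      rw [h3]
      exact_mod_cast (by linarith : (⟪vst, y'⟫ - (g y').toReal : ℝ) ≤ bst)
  -- gstar is never ⊥
  have hglb : ∀ vv : G, ((⟪vv, y0⟫ - (g y0).toReal : ℝ) : EReal) ≤ gstar vv := by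
    intro vv
    rw [hgstar]
    refine le_trans (le_of_eq ?_) (le_iSup _ y0)
    rw [hgy0]
    norm_cast
  have hbotg : ∀ vv : G, gstar vv ≠ ⊥ :=
    fun vv => ((EReal.bot_lt_coe _).trans_le (hglb vv)).ne'
  -- each gstar (v j), j ≤ k, is finite
  have htopg : ∀ j ≤ k, gstar (v j) ≠ ⊤ := by
    intro j hj htop
    have h1 := hsub j hj vst
    rw [htop] at h1
    rw [EReal.top_add_coe] at h1
    exact (EReal.coe_ne_top bst) (top_le_iff.mp (le_trans h1 hub))
  set s : ℕ → ℝ := fun j => (gstar (v j)).toReal with hsdef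
  have hs : ∀ j ≤ k, gstar (v j) = ((s j : ℝ) : EReal) :=
    fun j hj => (EReal.coe_toReal (htopg j hj) (hbotg (v j))).symm
  have hsubR : ∀ j ≤ k, ∀ v' : G,
      ((s j + (⟪ytil j, v' - v j⟫ - ε j) : ℝ) : EReal) ≤ gstar v' := by
    intro j hj v'
    have h1 := hsub j hj v'
    rw [hs j hj] at h1
    refine le_trans (le_of_eq ?_) h1
    norm_cast
  set sbar : ℝ := (k + 1 : ℝ)⁻¹ * ∑ j ∈ Finset.range (k + 1), s j with hsbar
  -- convexity of gstar at va
  have hC : gstar va ≤ (sbar : EReal) := by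
    rw [hgstar]
    refine iSup_le fun y' => ?_
    by_cases ht : g y' = ⊤
    · rw [ht]; simp
    · have hcoe : g y' = ((g y').toReal : EReal) := (EReal.coe_toReal ht (hbot y')).symm
      set d : ℝ := (g y').toReal with hd
      have hterm : ∀ j ≤ k, ⟪v j, y'⟫ - d ≤ s j := by
        intro j hj
        have h1 : ((⟪v j, y'⟫ - d : ℝ) : EReal) ≤ gstar (v j) := by
          rw [hgstar]
          refine le_trans (le_of_eq ?_) (le_iSup _ y')
          rw [hcoe]
          norm_cast
        rw [hs j hj] at h1
        exact_mod_cast h1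
      have hinner : ⟪va, y'⟫ = (k + 1 : ℝ)⁻¹ * ∑ j ∈ Finset.range (k + 1), ⟪v j, y'⟫ := by
        rw [hva, real_inner_smul_left, sum_inner]
      have hsum : ∑ j ∈ Finset.range (k + 1), (⟪v j, y'⟫ - d)
          ≤ ∑ j ∈ Finset.range (k + 1), s j :=
        Finset.sum_le_sum fun j hj => hterm j (Finset.mem_range_succ_iff.mp hj)
      rw [Finset.sum_sub_distrib, Finset.sum_const, Finset.card_range, nsmul_eq_mul] at hsum
      have hreal : ⟪va, y'⟫ - d ≤ sbar := by
        rw [hinner, hsbar]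
        have h7 := mul_le_mul_of_nonneg_left hsum (inv_nonneg.mpr npos.le)
        have h9 : (k + 1 : ℝ)⁻¹ * ((∑ j ∈ Finset.range (k + 1), ⟪v j, y'⟫) - ((k:ℝ) + 1) * d)
            = (k + 1 : ℝ)⁻¹ * (∑ j ∈ Finset.range (k + 1), ⟪v j, y'⟫) - d := by
          rw [mul_sub, ← mul_assoc, inv_mul_cancel₀ npos.ne', one_mul]
        push_cast at h7 h9 ⊢
        linarith
      rw [hcoe]
      have h3 : ((⟪va, y'⟫ : ℝ) : EReal) - ((d : ℝ) : EReal)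
          = ((⟪va, y'⟫ - d : ℝ) : EReal) := by norm_cast
      rw [h3]
      exact_mod_cast hreal
  -- main inequality
  have main : ∀ v' : G, gstar va + ((⟪ya, v' - va⟫ - εa : ℝ) : EReal) ≤ gstar v' := by
    intro v'
    set r : ℕ → ℝ := fun j => s j + (⟪ytil j, v' - v j⟫ - ε j) with hrdef
    have hyainner : ∀ x : G, ⟪ya, x⟫
        = (k + 1 : ℝ)⁻¹ * ∑ j ∈ Finset.range (k + 1), ⟪ytil j, x⟫ := by
      intro x
      rw [hya, real_inner_smul_left, sum_inner]
    have havg : (k + 1 : ℝ)⁻¹ * ∑ j ∈ Finset.range (k + 1), r j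
        = sbar + (⟪ya, v' - va⟫ - εa) := by
      rw [hsbar, hεa, hyainner (v' - va)]
      simp only [hrdef, inner_sub_right, Finset.sum_add_distrib, Finset.sum_sub_distrib]
      ring
    -- average is below some r j
    have hconstsum : ∑ _j ∈ Finset.range (k + 1),
        ((k + 1 : ℝ)⁻¹ * ∑ i ∈ Finset.range (k + 1), r i)
        ≤ ∑ j ∈ Finset.range (k + 1), r j := by
      rw [Finset.sum_const, Finset.card_range, nsmul_eq_mul]
      have h8 : ((k:ℝ) + 1) * ((k + 1 : ℝ)⁻¹ * ∑ i ∈ Finset.range (k + 1), r i)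
          = ∑ i ∈ Finset.range (k + 1), r i := by
        rw [← mul_assoc, mul_inv_cancel₀ npos.ne', one_mul]
      push_cast
      rw [h8]
    obtain ⟨j0, hj0T, hj0⟩ := Finset.exists_le_of_sum_le ⟨0, Finset.mem_range.mpr (by omega)⟩
      hconstsum
    have h9 : ((sbar + (⟪ya, v' - va⟫ - εa) : ℝ) : EReal) ≤ gstar v' := by
      rw [← havg]
      exact le_trans (EReal.coe_le_coe_iff.mpr hj0)
        (hsubR j0 (Finset.mem_range_succ_iff.mp hj0T) v')
    calc gstar va + ((⟪ya, v' - va⟫ - εa : ℝ) : EReal)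
        ≤ (sbar : EReal) + ((⟪ya, v' - va⟫ - εa : ℝ) : EReal) := add_le_add hC le_rfl
      _ = ((sbar + (⟪ya, v' - va⟫ - εa) : ℝ) : EReal) := by norm_cast
      _ ≤ gstar v' := h9
  refine ⟨?_, fun v' => main v'⟩
  -- nonnegativity of εa from main at va
  have h1 := main va
  have hva0 : (⟪ya, va - va⟫ : ℝ) = 0 := by rw [sub_self, inner_zero_right]
  rw [hva0] at h1
  have htop : gstar va ≠ ⊤ := fun h => EReal.coe_ne_top sbar (top_le_iff.mp (h ▸ hC))
  have hcoe : gstar va = (((gstar va).toReal : ℝ) : EReal) :=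
    (EReal.coe_toReal htop (hbotg va)).symm
  rw [hcoe] at h1
  have h2 : (((gstar va).toReal : ℝ) : EReal) + ((0 - εa : ℝ) : EReal)
      = (((gstar va).toReal + (0 - εa) : ℝ) : EReal) := by norm_cast
  rw [h2] at h1
  have h3 : ((gstar va).toReal + (0 - εa) : ℝ) ≤ (gstar va).toReal := by exact_mod_cast h1
  linarith
end

section
/- Let G be a real inner product space with weighted norm ‖·‖_γ, γ > 0, and σ ∈ [0,1). Suppose for a given p ∈ G² and all k, ‖p - p̂_k‖_γ² - ‖p - p̆_k‖_γ² = ‖p̃_k - p̂_k‖_γ² - ‖p̃_k - p̆_k‖_γ² + 2⟨p̆_k - p̂_k, p - p̃_k⟩_γ, where p̃_k = (v_k, Lx_k), p̂_k = (ẑ_k, ŷ_k), p̆_k = (ẑ_k + γ(Lx_k - ỹ_k), γ^{-1}(ẑ_k + γLx_k - v_k)), e_k = v_k - ẑ_k + γ(ỹ_k - Lx_k), and ‖e_k‖² + 2γε_k ≤ σ²γ²‖Lx_k - ŷ_k‖². Then ‖p - p̂_k‖_γ² - ‖p - p̆_k‖_γ² ≥ γ(1 - σ²)‖Lx_k - ŷ_k‖²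 + 2[ε_k + ⟨p̆_k - p̂_k, p - p̃_k⟩_γ]. -/
open RealInnerProductSpace

/- Lemma 3.3(b): lower bound for ‖p - p̂‖²_γ - ‖p - p̆‖²_γ. -/
theorem stmt18 {G : Type*} [NormedAddCommGroup G] [InnerProductSpace ℝ G]
    (γ σ : ℝ) (hγ : 0 < γ) (hσ0 : 0 ≤ σ) (hσ1 : σ < 1)
    (N : G × G → ℝ) (hN : ∀ r : G × G, N r = γ⁻¹ * ‖r.1‖ ^ 2 + γ * ‖r.2‖ ^ 2)
    (Iγ : G × G → G × G → ℝ)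
    (hIγ : ∀ p q : G × G, Iγ p q = γ⁻¹ * ⟪p.1, q.1⟫ + γ * ⟪p.2, q.2⟫)
    (v zhat ytil Lx yhat e : G) (ε : ℝ) (hε : 0 ≤ ε)
    (ptil phat pbrev : G × G) (p : G × G)
    (hptil : ptil = (v, Lx)) (hphat : phat = (zhat, yhat))
    (hpbrev : pbrev = (zhat + γ • (Lx - ytil), γ⁻¹ • (zhat + γ • Lx - v)))
    (he : e = v - zhat + γ • (ytil - Lx))
    (herr : ‖e‖ ^ 2 + 2 * γ * ε ≤ σ ^ 2 * γ ^ 2 * ‖Lx - yhat‖ ^ 2)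
    (hid : N (p - phat) - N (p - pbrev) =
      N (ptil - phat) - N (ptil - pbrev) + 2 * Iγ (pbrev - phat) (p - ptil)) :
    N (p - phat) - N (p - pbrev) ≥
      γ * (1 - σ ^ 2) * ‖Lx - yhat‖ ^ 2 + 2 * (ε + Iγ (pbrev - phat) (p - ptil)) := by
  have hγ0 : γ ≠ 0 := hγ.ne'
  have e1 : v - (zhat + γ • (Lx - ytil)) = e := by rw [he]; module
  have e2 : Lx - γ⁻¹ • (zhat + γ • Lx - v) = γ⁻¹ • (v - zhat) := by
    match_scalars <;> field_simp <;> ring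
  have hns : ‖γ⁻¹ • (v - zhat)‖ ^ 2 = γ⁻¹ ^ 2 * ‖v - zhat‖ ^ 2 := by
    rw [norm_smul, Real.norm_eq_abs, abs_of_pos (inv_pos.mpr hγ)]; ring
  have hkey : N (ptil - phat) - N (ptil - pbrev)
      = γ * ‖Lx - yhat‖ ^ 2 - γ⁻¹ * ‖e‖ ^ 2 := by
    rw [hN, hN, hptil, hphat, hpbrev]
    simp only [Prod.fst_sub, Prod.snd_sub]
    rw [show ((v, Lx) : G × G).1 - ((zhat + γ • (Lx - ytil), γ⁻¹ • (zhat + γ • Lx - v)) : G × G).1 = e from e1,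
        show ((v, Lx) : G × G).2 - ((zhat + γ • (Lx - ytil), γ⁻¹ • (zhat + γ • Lx - v)) : G × G).2 = γ⁻¹ • (v - zhat) from e2,
        hns]
    field_simp
    ring
  rw [hid, hkey]
  have hdiv : γ⁻¹ * (‖e‖ ^ 2 + 2 * γ * ε) ≤ γ⁻¹ * (σ ^ 2 * γ ^ 2 * ‖Lx - yhat‖ ^ 2) :=
    mul_le_mul_of_nonneg_left herr (inv_pos.mpr hγ).le
  have hc : γ⁻¹ * γ = 1 := inv_mul_cancel₀ hγ0
  nlinarith [hdiv, hc]
end
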